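/- For every k ∈ ℕ, m > k, p,q ∈ [0,1] and every integer n ≥ (k+1)(4m+1)², P_{p,q}(|C₀| ≥ n) ≤ P̃(|C̃₀| ≥ n/((k+1)m²)), where C₀ is the open cluster of the origin in S^k, and C̃₀ is the open cluster of the origin in the site percolation model on ℤ² with measure P̃ induced from P_{p,q} by declaring a vertex v = (x,y) ∈ ℤ² open if and only if the event C_m(S_{v,m}) occurs for the box S_{v,m} = [mx+1, mx+m]×[my+1, my+m]×{0,…,k}. -/

import Mathlib

open MeasureTheory Set
open scoped ENNReal

namespace AnisoSlab

set_option maxHeartbeats 1600000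

/-! ### A concrete construction of countable products of Bernoulli measures

The product Bernoulli measure on `ι → Bool` (each coordinate `i` open with
probability `P i`, independently) is realized as the pushforward of Lebesgue
measure on `[0,1)`: the binary digits of a uniform sample are i.i.d. fair
coins; regrouping them along a pairing function yields countably many
independent uniform samples, and comparing the `i`-th sample with `P i`
yields the desired independent Bernoulli coordinates. -/

/-- The `n`-th binary digit of `x` (digits after the binary point). -/
noncomputable def binDigit (n : ℕ) (x : ℝ) : Bool :=
  decide (⌊x * 2 ^ (n + 1)⌋ % 2 = 1)

/-- Countably many independent uniform-`[0,1]` samples extracted from a single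
uniform sample `x` on `[0,1)`, by regrouping its binary digits. -/
noncomputable def unifSample (i : ℕ) (x : ℝ) : ℝ :=
  ∑' n : ℕ, if binDigit (Nat.pair i n) x then ((2 : ℝ) ^ (n + 1))⁻¹ else 0

/-- The product Bernoulli measure on `ι → Bool`, coordinate `i` being `true`
with probability `P i`, independently over `i`. -/
noncomputable def bernoulliProduct {ι : Type*} [Encodable ι] (P : ι → ℝ) :
    Measure (ι → Bool) :=
  Measure.map (fun x i => decide (unifSample (Encodable.encode i) x < P i))
    (volume.restrict (Set.Ico (0 : ℝ) 1))

/-! ### The slab `S^k` and anisotropic bond percolation on it -/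

/-- Ambient vertices: `ℤ³`; the slab `S^k` uses those with third coordinate in `{0, …, k}`. -/
abbrev Vtx : Type := ℤ × ℤ × ℤ

/-- The three unit coordinate vectors. -/
def dvec : Fin 3 → Vtx
  | 0 => (1, 0, 0)
  | 1 => (0, 1, 0)
  | 2 => (0, 0, 1)

/-- A bond is indexed by its lower endpoint `v` and a direction `i`; it joins
`v` to `v + dvec i`. Directions `0, 1` give radial (horizontal) bonds, and
direction `2` gives axial (vertical) bonds. -/
abbrev EdgeIdx : Type := Vtx × Fin 3

/-- A percolation configuration: each bond is open (`true`) or closed (`false`). -/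
abbrev Config : Type := EdgeIdx → Bool

/-- `v` is a vertex of the slab `S^k`. -/
def InSlab (k : ℕ) (v : Vtx) : Prop := 0 ≤ v.2.2 ∧ v.2.2 ≤ k

/-- `(v, i)` is a bond of the slab `S^k` (both endpoints lie in the slab). -/
def IsEdge (k : ℕ) (e : EdgeIdx) : Prop := InSlab k e.1 ∧ InSlab k (e.1 + dvec e.2)

/-- The measure `P_{p,q}` on configurations of `S^k`: each radial (horizontal)
bond is open with probability `p` and each axial (vertical) bond is open with
probability `q`, independently. -/
noncomputable def slabMeasure (k : ℕ) (p q : ℝ) : Measure Config :=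
  bernoulliProduct (fun e => if e.2 = 2 then q else p)

/-- `x` and `y` are joined by an open bond of `S^k` in the configuration `ω`. -/
def OpenAdj (k : ℕ) (ω : Config) (x y : Vtx) : Prop :=
  ∃ i : Fin 3,
    (y = x + dvec i ∧ IsEdge k (x, i) ∧ ω (x, i) = true) ∨
    (x = y + dvec i ∧ IsEdge k (y, i) ∧ ω (y, i) = true)

/-- The open cluster of the vertex `x` in the configuration `ω`. -/
def cluster (k : ℕ) (ω : Config) (x : Vtx) : Set Vtx :=
  {y | Relation.ReflTransGen (OpenAdj k ω) x y}

/-- The percolation function `θ(p,q) = P_{p,q}(0 ↔ ∞)`. -/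
noncomputable def theta (k : ℕ) (p q : ℝ) : ℝ≥0∞ :=
  slabMeasure k p q {ω | (cluster k ω 0).Infinite}

/-- `p_k = 1 - (1/2)^{1/(k+1)}`, the horizontal critical value at `q = 1`. -/
noncomputable def pCrit (k : ℕ) : ℝ := 1 - (1 / 2 : ℝ) ^ ((1 : ℝ) / (k + 1))

/-- The critical curve `q_c(p) = sup {q ∈ [0,1] : θ(p,q) = 0}`. -/
noncomputable def qc (k : ℕ) (p : ℝ) : ℝ :=
  sSup {q : ℝ | q ∈ Set.Icc (0 : ℝ) 1 ∧ theta k p q = 0}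

/-- The critical curve `p_c(q) = sup {p ∈ [0,1] : θ(p,q) = 0}`. -/
noncomputable def pc (k : ℕ) (q : ℝ) : ℝ :=
  sSup {p : ℝ | p ∈ Set.Icc (0 : ℝ) 1 ∧ theta k p q = 0}


/-- The sup-norm (maximum-norm) distance on `ℤ³`. -/
def supDist (x y : Vtx) : ℤ := max |x.1 - y.1| (max |x.2.1 - y.2.1| |x.2.2 - y.2.2|)

/-- The event `C_m(A)`: some vertex of `A` is connected by an open path to a
vertex at maximum-norm distance `m` from `A`. -/
def CmEvent (k m : ℕ) (A : Set Vtx) : Set Config :=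
  {ω | ∃ x ∈ A, ∃ y ∈ cluster k ω x,
        (∀ a ∈ A, (m : ℤ) ≤ supDist y a) ∧ ∃ a ∈ A, supDist y a = (m : ℤ)}

/-- The box `S_m = [0, m-1]² × {0,…,k}`. -/
def Sm (k m : ℕ) : Set Vtx :=
  {v | 0 ≤ v.1 ∧ v.1 ≤ (m : ℤ) - 1 ∧ 0 ≤ v.2.1 ∧ v.2.1 ≤ (m : ℤ) - 1 ∧ InSlab k v}

/-- The box `S_{v,m} = [mv₁+1, mv₁+m] × [mv₂+1, mv₂+m] × {0,…,k}`. -/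
def Svm (k m : ℕ) (v : ℤ × ℤ) : Set Vtx :=
  {w | (m : ℤ) * v.1 + 1 ≤ w.1 ∧ w.1 ≤ (m : ℤ) * v.1 + m ∧
       (m : ℤ) * v.2 + 1 ≤ w.2.1 ∧ w.2.1 ≤ (m : ℤ) * v.2 + m ∧ InSlab k w}

open scoped Classical in
/-- The induced site configuration on `ℤ²`: the site `v` is declared open iff
the event `C_m(S_{v,m})` occurs. -/
noncomputable def inducedSite (k m : ℕ) (ω : Config) : ℤ × ℤ → Bool :=
  fun v => decide (ω ∈ CmEvent k m (Svm k m v))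

/-- The induced site percolation measure `P̃` on `{0,1}^{ℤ²}`. -/
noncomputable def inducedMeasure (k m : ℕ) (p q : ℝ) : Measure ((ℤ × ℤ) → Bool) :=
  Measure.map (inducedSite k m) (slabMeasure k p q)

/-- The open cluster of `x` in nearest-neighbour site percolation on `ℤ²`. -/
def siteCluster (η : (ℤ × ℤ) → Bool) (x : ℤ × ℤ) : Set (ℤ × ℤ) :=
  {y | Relation.ReflTransGen
        (fun a b => |a.1 - b.1| + |a.2 - b.2| = 1 ∧ η a = true ∧ η b = true) x y ∧
      η y = true}

/-! ### Auxiliary material -/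

section DigitLemmas

lemma measurable_binDigit (t : ℕ) : Measurable (binDigit t) := by
  have h1 : Measurable fun x : ℝ => ⌊x * 2 ^ (t + 1)⌋ :=
    Int.measurable_floor.comp (measurable_id.mul_const _)
  exact (Measurable.of_discrete (f := fun z : ℤ => decide (z % 2 = 1))).comp h1

lemma binDigit_succ (t : ℕ) (x : ℝ) :
    binDigit (t + 1) x = binDigit t (Int.fract (2 * x)) := by
  unfold binDigit
  have h2 : Int.fract (2 * x) * 2 ^ (t + 1)
      = x * 2 ^ (t + 2) - ((⌊2 * x⌋ * 2 ^ (t + 1) : ℤ) : ℝ) := by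
    simp only [Int.fract]
    push_cast
    ring
  rw [h2, Int.floor_sub_intCast]
  have h3 : (2 : ℤ) ∣ 2 ^ (t + 1) := dvd_pow_self 2 (Nat.succ_ne_zero t)
  obtain ⟨c, hc⟩ := h3
  have h4 : ⌊2 * x⌋ * 2 ^ (t + 1) = (⌊2 * x⌋ * c) * 2 := by rw [hc]; ring
  rw [h4]
  congr 1
  generalize ⌊x * 2 ^ (t + 2)⌋ = a
  generalize ⌊2 * x⌋ * c = d
  have he : (a - d * 2) % 2 = a % 2 := by omega
  rw [he]

lemma binDigit_zero_low {x : ℝ} (h0 : 0 ≤ x) (h1 : x < 1 / 2) :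
    binDigit 0 x = false := by
  have hf : ⌊x * 2 ^ (0 + 1)⌋ = 0 := by
    rw [Int.floor_eq_zero_iff, Set.mem_Ico]
    refine ⟨by positivity, ?_⟩
    norm_num
    linarith
  unfold binDigit
  rw [hf]
  simp

lemma binDigit_zero_high {x : ℝ} (h0 : 1 / 2 ≤ x) (h1 : x < 1) :
    binDigit 0 x = true := by
  have hf : ⌊x * 2 ^ (0 + 1)⌋ = 1 := by
    rw [Int.floor_eq_iff]
    push_cast
    norm_num
    constructor <;> linarith
  unfold binDigit
  rw [hf]
  simp

lemma fract_two_low {x : ℝ} (h0 : 0 ≤ x) (h1 : x < 1 / 2) :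
    Int.fract (2 * x) = 2 * x :=
  Int.fract_eq_self.mpr ⟨by linarith, by linarith⟩

lemma fract_two_high {x : ℝ} (h0 : 1 / 2 ≤ x) (h1 : x < 1) :
    Int.fract (2 * x) = 2 * x - 1 := by
  have h2 : (2 * x) = (2 * x - 1) + ((1 : ℤ) : ℝ) := by push_cast; ring
  rw [h2, Int.fract_add_intCast, Int.fract_eq_self.mpr ⟨by linarith, by linarith⟩]
  push_cast
  ring

/-- Cylinder sets of binary digits. -/
def cylR (T : Finset ℕ) (b : ℕ → Bool) : Set ℝ := {x | ∀ t ∈ T, binDigit t x = b t}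

lemma measurableSet_cylR (T : Finset ℕ) (b : ℕ → Bool) : MeasurableSet (cylR T b) := by
  have : cylR T b = ⋂ t ∈ T, (binDigit t) ⁻¹' {b t} := by
    ext x; simp [cylR]
  rw [this]
  exact MeasurableSet.biInter T.countable_toSet fun t _ =>
    (measurable_binDigit t) (measurableSet_singleton _)

lemma vol_preimage_double (S : Set ℝ) :
    volume ((fun x : ℝ => 2 * x) ⁻¹' S) = 2⁻¹ * volume S := by
  rw [Real.volume_preimage_mul_left (by norm_num : (2:ℝ) ≠ 0) S]
  congr 1
  rw [abs_of_pos (by norm_num : (0:ℝ) < 2⁻¹)]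
  rw [ENNReal.ofReal_inv_of_pos (by norm_num : (0:ℝ) < 2)]
  norm_num

lemma vol_preimage_double' (S : Set ℝ) :
    volume ((fun x : ℝ => 2 * x - 1) ⁻¹' S) = 2⁻¹ * volume S := by
  have h1 : (fun x : ℝ => 2 * x - 1) ⁻¹' S
      = (fun x : ℝ => 2 * x) ⁻¹' ((fun y : ℝ => y + (-1)) ⁻¹' S) := by
    ext x; simp [sub_eq_add_neg]
  rw [h1, vol_preimage_double, measure_preimage_add_right]

lemma vol_cylR_aux : ∀ (N : ℕ) (T : Finset ℕ) (b : ℕ → Bool), T ⊆ Finset.range N →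
    volume (Ico (0 : ℝ) 1 ∩ cylR T b) = 2⁻¹ ^ T.card := by
  intro N
  induction N with
  | zero =>
    intro T b hT
    have hTe : T = ∅ := Finset.subset_empty.mp (by simpa using hT)
    subst hTe
    have : cylR ∅ b = univ := by ext x; simp [cylR]
    simp [this, Real.volume_Ico]
  | succ N ih =>
    intro T b hT
    classical
    set T' : Finset ℕ := (T.erase 0).image (· - 1) with hT'def
    set b' : ℕ → Bool := fun s => b (s + 1) with hb'def
    have hT'sub : T' ⊆ Finset.range N := by
      intro s hs
      simp only [hT'def, Finset.mem_image, Finset.mem_erase] at hs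
      obtain ⟨t, ⟨ht0, htT⟩, rfl⟩ := hs
      have := hT htT
      simp only [Finset.mem_range] at this ⊢
      omega
    have hinj : Set.InjOn (· - 1) (T.erase 0 : Finset ℕ) := by
      intro a ha c hc h
      simp only [Finset.coe_erase, Set.mem_diff, Finset.mem_coe] at ha hc
      have ha0 : a ≠ 0 := by simpa using ha.2
      have hc0 : c ≠ 0 := by simpa using hc.2
      simp only at h
      omega
    have hcard' : T'.card = (T.erase 0).card := Finset.card_image_of_injOn hinj
    have key : ∀ x : ℝ, x ∈ cylR T b ↔
        ((0 ∈ T → binDigit 0 x = b 0) ∧ Int.fract (2 * x) ∈ cylR T' b') := by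
      intro x
      constructor
      · intro h
        refine ⟨fun h0 => h 0 h0, fun s hs => ?_⟩
        simp only [hT'def, Finset.mem_image, Finset.mem_erase] at hs
        obtain ⟨t, ⟨ht0, htT⟩, rfl⟩ := hs
        have ht : t - 1 + 1 = t := by omega
        have hbd : binDigit (t - 1 + 1) x = binDigit (t - 1) (Int.fract (2 * x)) :=
          binDigit_succ _ _
        rw [ht] at hbd
        rw [← hbd, hb'def]
        simp only []
        rw [ht]
        exact h t htT
      · rintro ⟨h0, hrest⟩ t htT
        rcases Nat.eq_zero_or_pos t with rfl | ht
        · exact h0 htT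
        · have hmem : t - 1 ∈ T' := by
            simp only [hT'def, Finset.mem_image, Finset.mem_erase]
            exact ⟨t, ⟨by omega, htT⟩, rfl⟩
          have h1 := hrest _ hmem
          have hbd : binDigit (t - 1 + 1) x = binDigit (t - 1) (Int.fract (2 * x)) :=
            binDigit_succ _ _
          have ht1 : t - 1 + 1 = t := by omega
          rw [ht1] at hbd
          rw [hbd, h1, hb'def]
          simp only []
          rw [ht1]
    have hsplit : Ico (0:ℝ) 1 ∩ cylR T b
        = (Ico (0:ℝ) (1/2) ∩ cylR T b) ∪ (Ico (1/2 : ℝ) 1 ∩ cylR T b) := by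
      rw [← Set.union_inter_distrib_right, Set.Ico_union_Ico_eq_Ico (by norm_num) (by norm_num)]
    have hdisj : Disjoint (Ico (0:ℝ) (1/2) ∩ cylR T b) (Ico (1/2 : ℝ) 1 ∩ cylR T b) :=
      Disjoint.mono inter_subset_left inter_subset_left
        (Set.Ico_disjoint_Ico_same)
    have hmeas2 : MeasurableSet (Ico (1/2 : ℝ) 1 ∩ cylR T b) :=
      measurableSet_Ico.inter (measurableSet_cylR T b)
    have hIH : volume (Ico (0:ℝ) 1 ∩ cylR T' b') = 2⁻¹ ^ T'.card := ih T' b' hT'sub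
    -- low half description
    have hlow : ∀ x : ℝ, x ∈ Ico (0:ℝ) (1/2) →
        (x ∈ cylR T b ↔ ((0 ∈ T → b 0 = false) ∧ 2 * x ∈ Ico (0:ℝ) 1 ∩ cylR T' b')) := by
      intro x hx
      obtain ⟨hx0, hx1⟩ := hx
      have hd0 : binDigit 0 x = false := binDigit_zero_low hx0 hx1
      have hfr : Int.fract (2 * x) = 2 * x := fract_two_low hx0 hx1
      rw [key x, hfr]
      constructor
      · rintro ⟨h1, h2⟩
        exact ⟨fun h0 => by rw [← h1 h0, hd0], ⟨by constructor <;> linarith, h2⟩⟩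
      · rintro ⟨h1, h2⟩
        exact ⟨fun h0 => by rw [hd0, h1 h0], h2.2⟩
    have hhigh : ∀ x : ℝ, x ∈ Ico (1/2 : ℝ) 1 →
        (x ∈ cylR T b ↔ ((0 ∈ T → b 0 = true) ∧ (2 * x - 1) ∈ Ico (0:ℝ) 1 ∩ cylR T' b')) := by
      intro x hx
      obtain ⟨hx0, hx1⟩ := hx
      have hd0 : binDigit 0 x = true := binDigit_zero_high hx0 hx1
      have hfr : Int.fract (2 * x) = 2 * x - 1 := fract_two_high hx0 hx1
      rw [key x, hfr]
      constructor
      · rintro ⟨h1, h2⟩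
        exact ⟨fun h0 => by rw [← h1 h0, hd0], ⟨by constructor <;> linarith, h2⟩⟩
      · rintro ⟨h1, h2⟩
        exact ⟨fun h0 => by rw [hd0, h1 h0], h2.2⟩
    have hlowset : ∀ (hc : 0 ∈ T → b 0 = false),
        Ico (0:ℝ) (1/2) ∩ cylR T b = (fun x : ℝ => 2 * x) ⁻¹' (Ico (0:ℝ) 1 ∩ cylR T' b') := by
      intro hc
      ext x
      simp only [mem_inter_iff, mem_preimage]
      constructor
      · rintro ⟨hx, hcyl⟩
        exact ((hlow x hx).mp hcyl).2
      · rintro ⟨hIco, hcyl⟩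
        obtain ⟨h20, h21⟩ := hIco
        have hx : x ∈ Ico (0:ℝ) (1/2) := ⟨by linarith, by linarith⟩
        exact ⟨hx, (hlow x hx).mpr ⟨hc, ⟨⟨h20, h21⟩, hcyl⟩⟩⟩
    have hlowempty : 0 ∈ T → b 0 = true → Ico (0:ℝ) (1/2) ∩ cylR T b = ∅ := by
      intro h0 hb0
      ext x
      simp only [mem_inter_iff, mem_empty_iff_false, iff_false, not_and]
      intro hx hcyl
      have := ((hlow x hx).mp hcyl).1 h0
      rw [hb0] at this
      exact Bool.noConfusion this
    have hhighset : ∀ (hc : 0 ∈ T → b 0 = true),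
        Ico (1/2 : ℝ) 1 ∩ cylR T b = (fun x : ℝ => 2 * x - 1) ⁻¹' (Ico (0:ℝ) 1 ∩ cylR T' b') := by
      intro hc
      ext x
      simp only [mem_inter_iff, mem_preimage]
      constructor
      · rintro ⟨hx, hcyl⟩
        exact ((hhigh x hx).mp hcyl).2
      · rintro ⟨hIco, hcyl⟩
        obtain ⟨h20, h21⟩ := hIco
        have hx : x ∈ Ico (1/2 : ℝ) 1 := ⟨by linarith, by linarith⟩
        exact ⟨hx, (hhigh x hx).mpr ⟨hc, ⟨⟨h20, h21⟩, hcyl⟩⟩⟩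
    have hhighempty : 0 ∈ T → b 0 = false → Ico (1/2 : ℝ) 1 ∩ cylR T b = ∅ := by
      intro h0 hb0
      ext x
      simp only [mem_inter_iff, mem_empty_iff_false, iff_false, not_and]
      intro hx hcyl
      have := ((hhigh x hx).mp hcyl).1 h0
      rw [hb0] at this
      exact Bool.noConfusion this
    rw [hsplit, measure_union hdisj hmeas2]
    by_cases h0 : 0 ∈ T
    · have hc1 : (T.erase 0).card = T.card - 1 := Finset.card_erase_of_mem h0
      have hTpos : 0 < T.card := Finset.card_pos.mpr ⟨0, h0⟩
      have hpow : (2⁻¹ : ℝ≥0∞) ^ T.card = 2⁻¹ * 2⁻¹ ^ (T.card - 1) := by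
        obtain ⟨c, hcx⟩ : ∃ c, T.card = c + 1 := ⟨T.card - 1, by omega⟩
        rw [hcx]
        simp only [Nat.add_sub_cancel]
        rw [pow_succ, mul_comm]
      cases hb0 : b 0 with
      | false =>
        rw [hlowset (fun _ => hb0), hhighempty h0 hb0]
        rw [vol_preimage_double, hIH, measure_empty, add_zero, hcard', hc1, hpow]
      | true =>
        rw [hhighset (fun _ => hb0), hlowempty h0 hb0]
        rw [vol_preimage_double', hIH, measure_empty, zero_add, hcard', hc1, hpow]
    · have herase : T.erase 0 = T := Finset.erase_eq_of_notMem h0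
      have hcardT : T'.card = T.card := by rw [hcard', herase]
      rw [hlowset (fun h => absurd h h0), hhighset (fun h => absurd h h0)]
      rw [vol_preimage_double, vol_preimage_double', hIH, hcardT]
      rw [← add_mul, ENNReal.inv_two_add_inv_two, one_mul]

lemma vol_cylR (T : Finset ℕ) (b : ℕ → Bool) :
    volume (Ico (0 : ℝ) 1 ∩ cylR T b) = 2⁻¹ ^ T.card := by
  refine vol_cylR_aux (T.sup id + 1) T b ?_
  intro t ht
  simp only [Finset.mem_range]
  exact Nat.lt_succ_of_le (Finset.le_sup (f := id) ht)

lemma vol_cyl_inj (T : Finset ℕ) (γ : ℕ → ℕ) (hγ : Set.InjOn γ T) (b : ℕ → Bool) :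
    volume (Ico (0 : ℝ) 1 ∩ {x | ∀ t ∈ T, binDigit (γ t) x = b t}) = 2⁻¹ ^ T.card := by
  classical
  set T₂ := T.image γ with hT₂
  set b₂ : ℕ → Bool := fun s => if h : ∃ t ∈ T, γ t = s then b h.choose else true with hb₂
  have hb₂γ : ∀ t ∈ T, b₂ (γ t) = b t := by
    intro t ht
    have hex : ∃ t' ∈ T, γ t' = γ t := ⟨t, ht, rfl⟩
    simp only [hb₂, dif_pos hex]
    have h1 := hex.choose_spec
    have h2 : hex.choose = t := hγ h1.1 ht h1.2
    rw [h2]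
  have hset : {x : ℝ | ∀ t ∈ T, binDigit (γ t) x = b t} = cylR T₂ b₂ := by
    ext x
    simp only [mem_setOf_eq, cylR, hT₂, Finset.mem_image]
    constructor
    · rintro h s ⟨t, ht, rfl⟩
      rw [h t ht, hb₂γ t ht]
    · intro h t ht
      rw [← hb₂γ t ht]
      exact h (γ t) ⟨t, ht, rfl⟩
  rw [hset, vol_cylR, hT₂, Finset.card_image_of_injOn hγ]

end DigitLemmas

section NuMeasure

/-- The digit sequence of a real number. -/
noncomputable def digitsFun : ℝ → (ℕ → Bool) := fun x t => binDigit t x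

lemma measurable_digitsFun : Measurable digitsFun :=
  measurable_pi_lambda _ measurable_binDigit

/-- The law of the digit sequence of a uniform sample: the fair-coin measure. -/
noncomputable def coinMeasure : Measure (ℕ → Bool) :=
  Measure.map digitsFun (volume.restrict (Ico (0 : ℝ) 1))

instance : IsProbabilityMeasure (volume.restrict (Ico (0 : ℝ) 1)) := by
  constructor
  rw [Measure.restrict_apply_univ, Real.volume_Ico]
  norm_num

instance : IsProbabilityMeasure coinMeasure :=
  Measure.isProbabilityMeasure_map measurable_digitsFun.aemeasurable

lemma measurableSet_cylB (T : Finset ℕ) (γ : ℕ → ℕ) (b : ℕ → Bool) :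
    MeasurableSet {d : ℕ → Bool | ∀ t ∈ T, d (γ t) = b t} := by
  have : {d : ℕ → Bool | ∀ t ∈ T, d (γ t) = b t}
      = ⋂ t ∈ T, (fun d : ℕ → Bool => d (γ t)) ⁻¹' {b t} := by
    ext d; simp
  rw [this]
  exact MeasurableSet.biInter T.countable_toSet fun t _ =>
    (measurable_pi_apply (γ t)) (measurableSet_singleton _)

lemma measurableSet_cylB0 (T : Finset ℕ) (b : ℕ → Bool) :
    MeasurableSet {d : ℕ → Bool | ∀ t ∈ T, d t = b t} := by
  have : {d : ℕ → Bool | ∀ t ∈ T, d t = b t}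
      = ⋂ t ∈ T, (fun d : ℕ → Bool => d t) ⁻¹' {b t} := by
    ext d; simp
  rw [this]
  exact MeasurableSet.biInter T.countable_toSet fun t _ =>
    (measurable_pi_apply t) (measurableSet_singleton _)

lemma coinMeasure_cyl_inj (T : Finset ℕ) (γ : ℕ → ℕ) (hγ : Set.InjOn γ T) (b : ℕ → Bool) :
    coinMeasure {d | ∀ t ∈ T, d (γ t) = b t} = 2⁻¹ ^ T.card := by
  rw [coinMeasure, Measure.map_apply measurable_digitsFun (measurableSet_cylB T γ b)]
  have hpre : digitsFun ⁻¹' {d | ∀ t ∈ T, d (γ t) = b t}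
      = {x : ℝ | ∀ t ∈ T, binDigit (γ t) x = b t} := rfl
  rw [hpre, Measure.restrict_apply']
  · rw [inter_comm]
    exact vol_cyl_inj T γ hγ b
  · exact measurableSet_Ico

/-- Cylinder events for the coin sequence. -/
def cylinders : Set (Set (ℕ → Bool)) :=
  {S | ∃ (T : Finset ℕ) (b : ℕ → Bool), S = {d | ∀ t ∈ T, d t = b t}}

lemma isPiSystem_cylinders : IsPiSystem cylinders := by
  rintro S ⟨T, b, rfl⟩ S' ⟨T', b', rfl⟩ hne
  obtain ⟨d₀, hd₀⟩ := hne
  simp only [mem_inter_iff, mem_setOf_eq] at hd₀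
  refine ⟨T ∪ T', d₀, ?_⟩
  ext d
  simp only [mem_inter_iff, mem_setOf_eq, Finset.mem_union]
  constructor
  · rintro ⟨h1, h2⟩ t ht
    rcases ht with ht | ht
    · rw [h1 t ht, ← hd₀.1 t ht]
    · rw [h2 t ht, ← hd₀.2 t ht]
  · intro h
    constructor
    · intro t ht; rw [h t (Or.inl ht), hd₀.1 t ht]
    · intro t ht; rw [h t (Or.inr ht), hd₀.2 t ht]

lemma generateFrom_cylinders :
    (inferInstance : MeasurableSpace (ℕ → Bool)) = MeasurableSpace.generateFrom cylinders := by
  apply le_antisymm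
  · have hev : ∀ i : ℕ, Measurable[MeasurableSpace.generateFrom cylinders]
        (fun d : ℕ → Bool => d i) := by
      intro i
      have hy : ∀ y : Bool, MeasurableSet[MeasurableSpace.generateFrom cylinders]
          ((fun d : ℕ → Bool => d i) ⁻¹' {y}) := by
        intro y
        apply MeasurableSpace.measurableSet_generateFrom
        refine ⟨{i}, fun _ => y, ?_⟩
        ext d
        simp
      exact @measurable_to_countable' Bool (ℕ → Bool) _ _ (MeasurableSpace.generateFrom cylinders) _ hy
    exact iSup_le fun i => measurable_iff_comap_le.mp (hev i)
  · apply MeasurableSpace.generateFrom_le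
    rintro S ⟨T, b, rfl⟩
    exact measurableSet_cylB0 T b

lemma coinMeasure_map_precomp (g : ℕ → ℕ) (hg : Function.Injective g) :
    Measure.map (fun d : ℕ → Bool => d ∘ g) coinMeasure = coinMeasure := by
  have hmg : Measurable fun d : ℕ → Bool => d ∘ g :=
    measurable_pi_lambda _ fun t => measurable_pi_apply (g t)
  haveI : IsProbabilityMeasure (Measure.map (fun d : ℕ → Bool => d ∘ g) coinMeasure) :=
    Measure.isProbabilityMeasure_map hmg.aemeasurable
  refine ext_of_generate_finite cylinders generateFrom_cylinders isPiSystem_cylinders ?_ (by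
    simp [measure_univ])
  rintro S ⟨T, b, rfl⟩
  rw [Measure.map_apply hmg (measurableSet_cylB0 T b)]
  have hpre : (fun d : ℕ → Bool => d ∘ g) ⁻¹' {d | ∀ t ∈ T, d t = b t}
      = {d | ∀ t ∈ T, d (g t) = b t} := rfl
  rw [hpre, coinMeasure_cyl_inj T g hg.injOn b]
  have hid : coinMeasure {d : ℕ → Bool | ∀ t ∈ T, d t = b t} = 2⁻¹ ^ T.card := by
    have h := coinMeasure_cyl_inj T id (Set.injOn_id _) b
    simpa using h
  rw [hid]

end NuMeasure

section BernoulliFactorization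

/-- The binary expansion sum. -/
noncomputable def hsum (d : ℕ → Bool) : ℝ :=
  ∑' n : ℕ, if d n then ((2 : ℝ) ^ (n + 1))⁻¹ else 0

lemma measurable_hsum : Measurable hsum := by
  have heq : hsum = fun d =>
      ENNReal.toReal (∑' n : ℕ, if d n then ((2 : ℝ≥0∞) ^ (n + 1))⁻¹ else 0) := by
    funext d
    rw [ENNReal.tsum_toReal_eq]
    · unfold hsum
      congr 1
      funext n
      split
      · simp [ENNReal.toReal_inv, ENNReal.toReal_pow]
      · simp
    · intro n
      split
      · exact ENNReal.inv_ne_top.mpr (pow_ne_zero _ (by norm_num))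
      · simp
  rw [heq]
  refine Measurable.ennreal_toReal ?_
  refine Measurable.ennreal_tsum fun n => ?_
  have hset : MeasurableSet {d : ℕ → Bool | d n = true} := by
    show MeasurableSet ((fun d : ℕ → Bool => d n) ⁻¹' {true})
    exact (measurable_pi_apply n) (measurableSet_singleton true)
  exact Measurable.ite hset measurable_const measurable_const

lemma measurable_decide_lt (c : ℝ) : Measurable fun r : ℝ => decide (r < c) := by
  apply measurable_to_countable'
  intro y
  cases y
  · have : (fun r : ℝ => decide (r < c)) ⁻¹' {false} = Ici c := by
      ext r
      simp [decide_eq_false_iff_not, not_lt]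
    rw [this]
    exact measurableSet_Ici
  · have : (fun r : ℝ => decide (r < c)) ⁻¹' {true} = Iio c := by
      ext r
      simp
    rw [this]
    exact measurableSet_Iio

/-- The factorized coordinate map. -/
noncomputable def bpMap {ι : Type*} [Encodable ι] (P : ι → ℝ) (d : ℕ → Bool) (i : ι) : Bool :=
  decide (hsum (fun n => d (Nat.pair (Encodable.encode i) n)) < P i)

lemma measurable_bpMap {ι : Type*} [Encodable ι] (P : ι → ℝ) : Measurable (bpMap P) :=
  measurable_pi_lambda _ fun i =>
    (measurable_decide_lt (P i)).comp
      (measurable_hsum.comp (measurable_pi_lambda _ fun n => measurable_pi_apply _))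

lemma bernoulliProduct_eq_map {ι : Type*} [Encodable ι] (P : ι → ℝ) :
    bernoulliProduct P = Measure.map (bpMap P) coinMeasure := by
  rw [coinMeasure, Measure.map_map (measurable_bpMap P) measurable_digitsFun]
  rfl

section Relabel

variable {ι : Type*} [Encodable ι]

open Encodable in
/-- The digit-relabeling map associated with a permutation of indices. -/
def gmap (σ : ι ≃ ι) : ℕ → ℕ := fun t =>
  match decode (α := ι) t.unpair.1 with
  | some i => if encode i = t.unpair.1 then Nat.pair (encode (σ i)) t.unpair.2 else t
  | none => t

open Encodable in
lemma gmap_pair (σ : ι ≃ ι) (i : ι) (n : ℕ) :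
    gmap σ (Nat.pair (encode i) n) = Nat.pair (encode (σ i)) n := by
  simp [gmap, Nat.unpair_pair, encodek]

open Encodable in
lemma gmap_not_pair (σ : ι ≃ ι) {t : ℕ} (h : ∀ (i : ι) (n : ℕ), t ≠ Nat.pair (encode i) n) :
    gmap σ t = t := by
  unfold gmap
  cases hdec : decode (α := ι) t.unpair.1 with
  | none => rfl
  | some i =>
    simp only
    split
    · rename_i henc
      exfalso
      refine h i t.unpair.2 ?_
      rw [henc, Nat.pair_unpair]
    · rfl

open Encodable in
lemma gmap_injective (σ : ι ≃ ι) : Function.Injective (gmap σ) := by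
  intro s t h
  by_cases hs : ∃ (i : ι) (n : ℕ), s = Nat.pair (encode i) n
  · obtain ⟨i, n, rfl⟩ := hs
    by_cases ht : ∃ (j : ι) (m : ℕ), t = Nat.pair (encode j) m
    · obtain ⟨j, m, rfl⟩ := ht
      rw [gmap_pair, gmap_pair] at h
      rw [Nat.pair_eq_pair] at h
      obtain ⟨he, rfl⟩ := h
      have hij : σ i = σ j := encode_injective he
      rw [σ.injective hij]
    · push_neg at ht
      rw [gmap_pair, gmap_not_pair σ ht] at h
      exact absurd h.symm (ht (σ i) n)
  · push_neg at hs
    by_cases ht : ∃ (j : ι) (m : ℕ), t = Nat.pair (encode j) m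
    · obtain ⟨j, m, rfl⟩ := ht
      rw [gmap_pair, gmap_not_pair σ hs] at h
      exact absurd h (hs (σ j) m)
    · push_neg at ht
      rw [gmap_not_pair σ hs, gmap_not_pair σ ht] at h
      exact h

open Encodable in
theorem bernoulliProduct_map_precomp (P : ι → ℝ) (σ : ι ≃ ι) (hP : ∀ i, P (σ i) = P i) :
    Measure.map (fun ω : ι → Bool => ω ∘ σ) (bernoulliProduct P) = bernoulliProduct P := by
  have hmσ : Measurable fun ω : ι → Bool => ω ∘ σ :=
    measurable_pi_lambda _ fun i => measurable_pi_apply _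
  have hmg : Measurable fun d : ℕ → Bool => d ∘ gmap σ :=
    measurable_pi_lambda _ fun t => measurable_pi_apply _
  rw [bernoulliProduct_eq_map, Measure.map_map hmσ (measurable_bpMap P)]
  have hfun : (fun ω : ι → Bool => ω ∘ σ) ∘ bpMap P
      = bpMap P ∘ (fun d => d ∘ gmap σ) := by
    funext d
    funext i
    show bpMap P d (σ i) = bpMap P (d ∘ gmap σ) i
    unfold bpMap
    rw [hP i]
    have harg : (fun n => d (Nat.pair (encode (σ i)) n))
        = fun n => (d ∘ gmap σ) (Nat.pair (encode i) n) := by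
      funext n
      show d _ = d _
      rw [gmap_pair]
    rw [harg]
  rw [hfun, ← Measure.map_map (measurable_bpMap P) hmg,
    coinMeasure_map_precomp (gmap σ) (gmap_injective σ)]

end Relabel

end BernoulliFactorization

section SlabMeasurability

lemma measurableSet_openAdj (k : ℕ) (x y : Vtx) :
    MeasurableSet {ω : Config | OpenAdj k ω x y} := by
  have hrw : {ω : Config | OpenAdj k ω x y} = ⋃ i : Fin 3,
      (({_ω : Config | y = x + dvec i ∧ IsEdge k (x, i)} ∩ {ω : Config | ω (x, i) = true}) ∪
        ({_ω : Config | x = y + dvec i ∧ IsEdge k (y, i)} ∩ {ω : Config | ω (y, i) = true})) := by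
    ext ω
    simp only [mem_setOf_eq, mem_iUnion, mem_union, mem_inter_iff]
    unfold OpenAdj
    constructor
    · rintro ⟨i, h | h⟩
      · exact ⟨i, Or.inl ⟨⟨h.1, h.2.1⟩, h.2.2⟩⟩
      · exact ⟨i, Or.inr ⟨⟨h.1, h.2.1⟩, h.2.2⟩⟩
    · rintro ⟨i, h | h⟩
      · exact ⟨i, Or.inl ⟨h.1.1, h.1.2, h.2⟩⟩
      · exact ⟨i, Or.inr ⟨h.1.1, h.1.2, h.2⟩⟩
  rw [hrw]
  refine MeasurableSet.iUnion fun i => MeasurableSet.union ?_ ?_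
  · refine (MeasurableSet.const _).inter ?_
    show MeasurableSet ((fun ω : Config => ω (x, i)) ⁻¹' {true})
    exact (measurable_pi_apply (x, i)) (measurableSet_singleton true)
  · refine (MeasurableSet.const _).inter ?_
    show MeasurableSet ((fun ω : Config => ω (y, i)) ⁻¹' {true})
    exact (measurable_pi_apply (y, i)) (measurableSet_singleton true)

lemma measurableSet_chain (k : ℕ) : ∀ (l : List Vtx) (x : Vtx),
    MeasurableSet {ω : Config | List.Chain (OpenAdj k ω) x l} := by
  intro l
  induction l with
  | nil =>
    intro x
    have : {ω : Config | List.Chain (OpenAdj k ω) x []} = univ := by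
      ext ω; simp [List.Chain]
    rw [this]
    exact MeasurableSet.univ
  | cons c l ih =>
    intro x
    have : {ω : Config | List.Chain (OpenAdj k ω) x (c :: l)}
        = {ω : Config | OpenAdj k ω x c} ∩ {ω : Config | List.Chain (OpenAdj k ω) c l} := by
      ext ω; simp [List.Chain, List.isChain_cons_cons]
    rw [this]
    exact (measurableSet_openAdj k x c).inter (ih c)

lemma measurableSet_mem_cluster (k : ℕ) (x y : Vtx) :
    MeasurableSet {ω : Config | y ∈ cluster k ω x} := by
  have hrw : {ω : Config | y ∈ cluster k ω x} = ⋃ l : List Vtx,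
      ({ω : Config | List.Chain (OpenAdj k ω) x l} ∩
        {_ω : Config | (x :: l).getLast (List.cons_ne_nil x l) = y}) := by
    ext ω
    simp only [mem_iUnion, mem_inter_iff, mem_setOf_eq]
    constructor
    · intro h
      obtain ⟨l, h1, h2⟩ := List.exists_isChain_cons_of_relationReflTransGen h
      exact ⟨l, h1, h2⟩
    · rintro ⟨l, h1, h2⟩
      exact List.relationReflTransGen_of_exists_isChain_cons l h1 h2
  rw [hrw]
  exact MeasurableSet.iUnion fun l =>
    (measurableSet_chain k l x).inter (MeasurableSet.const _)

lemma measurableSet_CmEvent (k m : ℕ) (A : Set Vtx) : MeasurableSet (CmEvent k m A) := by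
  have hrw : CmEvent k m A = ⋃ x : Vtx, ⋃ y : Vtx,
      ({ω : Config | y ∈ cluster k ω x} ∩
        {_ω : Config | x ∈ A ∧ (∀ a ∈ A, (m : ℤ) ≤ supDist y a) ∧
          ∃ a ∈ A, supDist y a = (m : ℤ)}) := by
    ext ω
    simp only [CmEvent, mem_setOf_eq, mem_iUnion, mem_inter_iff]
    constructor
    · rintro ⟨x, hx, y, hy, h1, h2⟩
      exact ⟨x, y, hy, hx, h1, h2⟩
    · rintro ⟨x, y, hy, hx, h1, h2⟩
      exact ⟨x, hx, y, hy, h1, h2⟩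
  rw [hrw]
  exact MeasurableSet.iUnion fun x => MeasurableSet.iUnion fun y =>
    (measurableSet_mem_cluster k x y).inter (MeasurableSet.const _)

open scoped Classical in
lemma inducedSite_eq_true_iff (k m : ℕ) (ω : Config) (v : ℤ × ℤ) :
    inducedSite k m ω v = true ↔ ω ∈ CmEvent k m (Svm k m v) := by
  simp [inducedSite]

lemma measurable_inducedSite (k m : ℕ) : Measurable (inducedSite k m) := by
  apply measurable_pi_lambda
  intro v
  apply measurable_to_countable'
  intro b
  cases b
  · have hrw : (fun ω => inducedSite k m ω v) ⁻¹' {false} = (CmEvent k m (Svm k m v))ᶜ := by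
      ext ω
      simp only [mem_preimage, mem_singleton_iff, mem_compl_iff]
      rw [← inducedSite_eq_true_iff k m ω v]
      simp
    rw [hrw]
    exact (measurableSet_CmEvent k m _).compl
  · have hrw : (fun ω => inducedSite k m ω v) ⁻¹' {true} = CmEvent k m (Svm k m v) := by
      ext ω
      simp only [mem_preimage, mem_singleton_iff]
      exact inducedSite_eq_true_iff k m ω v
    rw [hrw]
    exact measurableSet_CmEvent k m _

end SlabMeasurability

section Combinatorics

lemma ediv_eq_iff' {m : ℤ} (hm : 0 < m) {c v : ℤ} :
    c / m = v ↔ m * v ≤ c ∧ c < m * v + m := by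
  constructor
  · rintro rfl
    have h1 := Int.mul_ediv_add_emod c m
    have h2 := Int.emod_nonneg c (ne_of_gt hm)
    have h3 := Int.emod_lt_of_pos c hm
    constructor <;> linarith
  · rintro ⟨h1, h2⟩
    have ha : v ≤ c / m := by
      rw [Int.le_ediv_iff_mul_le hm, mul_comm]
      exact h1
    have hb : c / m < v + 1 := by
      by_contra hcon
      push_neg at hcon
      have h1' := Int.mul_ediv_add_emod c m
      have h2' := Int.emod_nonneg c (ne_of_gt hm)
      have h4 := mul_le_mul_of_nonneg_left hcon hm.le
      nlinarith
    omega

/-- The renormalization box index of a vertex. -/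
def boxIdx (m : ℕ) (w : Vtx) : ℤ × ℤ := ((w.1 - 1) / (m : ℤ), (w.2.1 - 1) / (m : ℤ))

lemma mem_Svm_iff {k m : ℕ} (hm : 0 < m) {w : Vtx} {v : ℤ × ℤ} :
    w ∈ Svm k m v ↔ (InSlab k w ∧ boxIdx m w = v) := by
  have hmZ : (0 : ℤ) < (m : ℤ) := by exact_mod_cast hm
  unfold Svm boxIdx
  simp only [mem_setOf_eq, Prod.ext_iff]
  constructor
  · rintro ⟨h1, h2, h3, h4, h5⟩
    refine ⟨h5, ?_, ?_⟩
    · rw [ediv_eq_iff' hmZ]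
      constructor <;> linarith
    · rw [ediv_eq_iff' hmZ]
      constructor <;> linarith
  · rintro ⟨h5, h1, h2⟩
    rw [ediv_eq_iff' hmZ] at h1 h2
    exact ⟨by linarith [h1.1], by linarith [h1.2], by linarith [h2.1], by linarith [h2.2], h5⟩

lemma openAdj_symm {k : ℕ} {ω : Config} {x y : Vtx} (h : OpenAdj k ω x y) : OpenAdj k ω y x := by
  obtain ⟨i, h | h⟩ := h
  · exact ⟨i, Or.inr h⟩
  · exact ⟨i, Or.inl h⟩

lemma cluster_eq_of_mem {k : ℕ} {ω : Config} {x y : Vtx} (h : y ∈ cluster k ω x) :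
    cluster k ω y = cluster k ω x := by
  have hsym : Symmetric (Relation.ReflTransGen (OpenAdj k ω)) :=
    by haveI : Std.Symm (OpenAdj k ω) := ⟨fun _ _ hab => openAdj_symm hab⟩; exact fun _ _ h => Std.Symm.symm _ _ h
  have hxy : Relation.ReflTransGen (OpenAdj k ω) x y := h
  ext z
  constructor
  · intro hz
    exact Relation.ReflTransGen.trans hxy hz
  · intro hz
    exact Relation.ReflTransGen.trans (hsym hxy) hz

lemma cluster_subset_slab {k : ℕ} {ω : Config} : ∀ y ∈ cluster k ω 0, InSlab k y := by
  intro y hy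
  have hy' : Relation.ReflTransGen (OpenAdj k ω) 0 y := hy
  clear hy
  induction hy' with
  | refl =>
    constructor
    · exact le_refl 0
    · exact Int.ofNat_nonneg k
  | tail _ hstep ih =>
    obtain ⟨i, h | h⟩ := hstep
    · rw [h.1]
      exact h.2.1.2
    · exact h.2.1.1

/-- Distance of an integer to an interval. -/
def ivdist (c lo hi : ℤ) : ℤ := max 0 (max (lo - c) (c - hi))

/-- Sup-norm distance of a vertex to the box `Svm k m v`. -/
def boxDist (k m : ℕ) (v : ℤ × ℤ) (y : Vtx) : ℤ :=
  max (ivdist y.1 ((m : ℤ) * v.1 + 1) ((m : ℤ) * v.1 + (m : ℤ)))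
    (max (ivdist y.2.1 ((m : ℤ) * v.2 + 1) ((m : ℤ) * v.2 + (m : ℤ)))
      (ivdist y.2.2 0 (k : ℤ)))

lemma ivdist_le_abs {c lo hi e : ℤ} (h1 : lo ≤ e) (h2 : e ≤ hi) :
    ivdist c lo hi ≤ |c - e| := by
  simp only [abs_eq_max_neg]
  unfold ivdist
  omega

lemma boxDist_le_supDist {k m : ℕ} {v : ℤ × ℤ} (y : Vtx) {a : Vtx} (ha : a ∈ Svm k m v) :
    boxDist k m v y ≤ supDist y a := by
  obtain ⟨h1, h2, h3, h4, h5, h6⟩ := ha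
  have l1 := ivdist_le_abs (c := y.1) h1 h2
  have l2 := ivdist_le_abs (c := y.2.1) h3 h4
  have l3 := ivdist_le_abs (c := y.2.2) h5 h6
  unfold boxDist supDist
  refine max_le ?_ (max_le ?_ ?_)
  · exact l1.trans (le_max_left _ _)
  · exact l2.trans ((le_max_left _ _).trans (le_max_right _ _))
  · exact l3.trans ((le_max_right _ _).trans (le_max_right _ _))

lemma clamp_lo {lo hi c : ℤ} (h : lo ≤ hi) : lo ≤ max lo (min c hi) := by omega

lemma clamp_hi {lo hi c : ℤ} (h : lo ≤ hi) : max lo (min c hi) ≤ hi := by omega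

lemma abs_sub_clamp {lo hi c : ℤ} (h : lo ≤ hi) :
    |c - max lo (min c hi)| = max 0 (max (lo - c) (c - hi)) := by
  simp only [abs_eq_max_neg]
  omega

lemma exists_supDist_eq_boxDist {k m : ℕ} (hm : 0 < m) (v : ℤ × ℤ) (y : Vtx) :
    ∃ a ∈ Svm k m v, supDist y a = boxDist k m v y := by
  have hmZ : (1 : ℤ) ≤ (m : ℤ) := by exact_mod_cast hm
  have hk : (0 : ℤ) ≤ (k : ℤ) := Int.ofNat_nonneg k
  have hb1 : (m : ℤ) * v.1 + 1 ≤ (m : ℤ) * v.1 + (m : ℤ) := by linarith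
  have hb2 : (m : ℤ) * v.2 + 1 ≤ (m : ℤ) * v.2 + (m : ℤ) := by linarith
  refine ⟨(max ((m : ℤ) * v.1 + 1) (min y.1 ((m : ℤ) * v.1 + (m : ℤ))),
    max ((m : ℤ) * v.2 + 1) (min y.2.1 ((m : ℤ) * v.2 + (m : ℤ))),
    max 0 (min y.2.2 (k : ℤ))), ?_, ?_⟩
  · exact ⟨clamp_lo hb1, clamp_hi hb1, clamp_lo hb2, clamp_hi hb2, clamp_lo hk, clamp_hi hk⟩
  · show max |y.1 - max ((m : ℤ) * v.1 + 1) (min y.1 ((m : ℤ) * v.1 + (m : ℤ)))|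
        (max |y.2.1 - max ((m : ℤ) * v.2 + 1) (min y.2.1 ((m : ℤ) * v.2 + (m : ℤ)))|
          |y.2.2 - max 0 (min y.2.2 (k : ℤ))|) = boxDist k m v y
    rw [abs_sub_clamp hb1, abs_sub_clamp hb2, abs_sub_clamp hk]
    rfl

lemma boxDist_nonneg {k m : ℕ} (v : ℤ × ℤ) (y : Vtx) : 0 ≤ boxDist k m v y := by
  unfold boxDist ivdist
  omega

lemma adj_coord_diff {k : ℕ} {ω : Config} {y z : Vtx} (h : OpenAdj k ω y z) :
    |y.1 - z.1| ≤ 1 ∧ |y.2.1 - z.2.1| ≤ 1 ∧ |y.2.2 - z.2.2| ≤ 1 := by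
  obtain ⟨i, h | h⟩ := h
  · have h1 := h.1
    subst h1
    fin_cases i <;>
      simp only [dvec, Prod.fst_add, Prod.snd_add] <;>
      refine ⟨?_, ?_, ?_⟩ <;> simp only [abs_eq_max_neg] <;> omega
  · have h1 := h.1
    subst h1
    fin_cases i <;>
      simp only [dvec, Prod.fst_add, Prod.snd_add] <;>
      refine ⟨?_, ?_, ?_⟩ <;> simp only [abs_eq_max_neg] <;> omega

lemma ivdist_lipschitz {c c' lo hi : ℤ} (h : |c - c'| ≤ 1) :
    ivdist c' lo hi ≤ ivdist c lo hi + 1 := by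
  simp only [abs_eq_max_neg] at h
  unfold ivdist
  omega

lemma boxDist_lipschitz {k m : ℕ} {v : ℤ × ℤ} {y z : Vtx}
    (h : |y.1 - z.1| ≤ 1 ∧ |y.2.1 - z.2.1| ≤ 1 ∧ |y.2.2 - z.2.2| ≤ 1) :
    boxDist k m v z ≤ boxDist k m v y + 1 := by
  obtain ⟨h1, h2, h3⟩ := h
  have l1 := ivdist_lipschitz (lo := (m : ℤ) * v.1 + 1) (hi := (m : ℤ) * v.1 + (m : ℤ)) h1
  have l2 := ivdist_lipschitz (lo := (m : ℤ) * v.2 + 1) (hi := (m : ℤ) * v.2 + (m : ℤ)) h2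
  have l3 := ivdist_lipschitz (lo := (0 : ℤ)) (hi := (k : ℤ)) h3
  unfold boxDist
  refine max_le ?_ (max_le ?_ ?_)
  · exact l1.trans (add_le_add_left (le_max_left _ _) 1)
  · exact l2.trans (add_le_add_left ((le_max_left _ _).trans (le_max_right _ _)) 1)
  · exact l3.trans (add_le_add_left ((le_max_right _ _).trans (le_max_right _ _)) 1)

lemma exists_on_path {r : Vtx → Vtx → Prop} {f : Vtx → ℤ} {t : ℤ}
    (hlip : ∀ a b, r a b → f b ≤ f a + 1) :
    ∀ {w y : Vtx}, Relation.ReflTransGen r w y → f w ≤ t → t ≤ f y →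
      ∃ z, Relation.ReflTransGen r w z ∧ f z = t := by
  intro w y h
  induction h with
  | refl =>
    intro h1 h2
    exact ⟨w, Relation.ReflTransGen.refl, by omega⟩
  | @tail b y' hwb hby ih =>
    intro h1 h2
    by_cases hb : t ≤ f b
    · obtain ⟨z, hz1, hz2⟩ := ih h1 hb
      exact ⟨z, hz1, hz2⟩
    · push_neg at hb
      have hl := hlip _ _ hby
      have hy : f y' = t := by omega
      exact ⟨y', Relation.ReflTransGen.tail hwb hby, hy⟩

lemma encard_biUnion_le {β γ : Type*} (s : Finset β) (f : β → Set γ) :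
    (⋃ v ∈ s, f v).encard ≤ ∑ v ∈ s, (f v).encard := by
  classical
  induction s using Finset.induction_on with
  | empty => simp
  | insert a s hnot ih =>
    rw [Finset.set_biUnion_insert, Finset.sum_insert hnot]
    exact (Set.encard_union_le _ _).trans (add_le_add_right ih _)

lemma encard_Svm_le {k m : ℕ} (v : ℤ × ℤ) :
    (Svm k m v).encard ≤ ((m * m * (k + 1) : ℕ) : ℕ∞) := by
  classical
  set F : Finset Vtx :=
    (Finset.Icc ((m : ℤ) * v.1 + 1) ((m : ℤ) * v.1 + (m : ℤ))) ×ˢ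
      ((Finset.Icc ((m : ℤ) * v.2 + 1) ((m : ℤ) * v.2 + (m : ℤ))) ×ˢ
        (Finset.Icc (0 : ℤ) (k : ℤ))) with hF
  have hsub : Svm k m v ⊆ (F : Set Vtx) := by
    rintro ⟨w1, w2, w3⟩ ⟨h1, h2, h3, h4, h5, h6⟩
    simp only [hF, Finset.coe_product, Set.mem_prod, Finset.mem_coe, Finset.mem_Icc]
    exact ⟨⟨h1, h2⟩, ⟨h3, h4⟩, h5, h6⟩
  refine (Set.encard_mono hsub).trans ?_
  rw [Set.encard_coe_eq_coe_finsetCard]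
  have hcF : F.card = m * (m * (k + 1)) := by
    rw [hF, Finset.card_product, Finset.card_product, Int.card_Icc, Int.card_Icc, Int.card_Icc]
    have e1 : ((m : ℤ) * v.1 + (m : ℤ) + 1 - ((m : ℤ) * v.1 + 1)) = (m : ℤ) := by ring
    have e2 : ((m : ℤ) * v.2 + (m : ℤ) + 1 - ((m : ℤ) * v.2 + 1)) = (m : ℤ) := by ring
    have e3 : ((k : ℤ) + 1 - 0) = ((k + 1 : ℕ) : ℤ) := by push_cast; ring
    rw [e1, e2, e3, Int.toNat_natCast, Int.toNat_natCast]
  rw [hcF]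
  exact_mod_cast le_of_eq (by ring)

lemma box_open {k m : ℕ} (hm : k < m) {ω : Config} {n : ℕ}
    (hn : (k + 1) * (4 * m + 1) ^ 2 ≤ n) (hcard : (n : ℕ∞) ≤ (cluster k ω 0).encard)
    {w : Vtx} (hw : w ∈ cluster k ω 0) :
    ω ∈ CmEvent k m (Svm k m (boxIdx m w)) := by
  classical
  have hm0 : 0 < m := lt_of_le_of_lt (Nat.zero_le k) hm
  have hmZ : (1 : ℤ) ≤ (m : ℤ) := by exact_mod_cast hm0
  set v := boxIdx m w with hv
  have hwslab : InSlab k w := cluster_subset_slab w hw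
  have hwA : w ∈ Svm k m v := (mem_Svm_iff hm0).mpr ⟨hwslab, rfl⟩
  have hesc : ∃ y ∈ cluster k ω 0, (m : ℤ) ≤ boxDist k m v y := by
    by_contra hcon
    push_neg at hcon
    set F : Finset Vtx :=
      (Finset.Icc ((m : ℤ) * v.1 + 2 - (m : ℤ)) ((m : ℤ) * v.1 + 2 * (m : ℤ) - 1)) ×ˢ
        ((Finset.Icc ((m : ℤ) * v.2 + 2 - (m : ℤ)) ((m : ℤ) * v.2 + 2 * (m : ℤ) - 1)) ×ˢ
          (Finset.Icc (0 : ℤ) (k : ℤ))) with hF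
    have hsub : cluster k ω 0 ⊆ (F : Set Vtx) := by
      intro y hy
      have h1 := hcon y hy
      have h2 := cluster_subset_slab y hy
      obtain ⟨h21, h22⟩ := h2
      unfold boxDist ivdist at h1
      simp only [hF, Finset.coe_product, Set.mem_prod, Finset.mem_coe, Finset.mem_Icc]
      refine ⟨⟨?_, ?_⟩, ⟨?_, ?_⟩, ?_, ?_⟩ <;> omega
    have hle : (cluster k ω 0).encard ≤ (F.card : ℕ∞) := by
      refine (Set.encard_mono hsub).trans_eq ?_
      exact Set.encard_coe_eq_coe_finsetCard F
    have hnat : n ≤ F.card := by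
      have := hcard.trans hle
      exact_mod_cast this
    have hFle : F.card ≤ 3 * m * (3 * m * (k + 1)) := by
      rw [hF, Finset.card_product, Finset.card_product, Int.card_Icc, Int.card_Icc, Int.card_Icc]
      have e1 : ((m : ℤ) * v.1 + 2 * (m : ℤ) - 1 + 1 - ((m : ℤ) * v.1 + 2 - (m : ℤ))).toNat
          ≤ 3 * m := by omega
      have e2 : ((m : ℤ) * v.2 + 2 * (m : ℤ) - 1 + 1 - ((m : ℤ) * v.2 + 2 - (m : ℤ))).toNat
          ≤ 3 * m := by omega
      have e3 : ((k : ℤ) + 1 - 0).toNat = k + 1 := by omega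
      rw [e3]
      exact Nat.mul_le_mul e1 (Nat.mul_le_mul e2 (le_refl _))
    have hcontra : (k + 1) * (4 * m + 1) ^ 2 ≤ 3 * m * (3 * m * (k + 1)) :=
      le_trans (le_trans hn hnat) hFle
    nlinarith [hm0]
  obtain ⟨y₀, hy₀, hDy₀⟩ := hesc
  have hy₀w : Relation.ReflTransGen (OpenAdj k ω) w y₀ := by
    have h := cluster_eq_of_mem hw
    rw [← h] at hy₀
    exact hy₀
  have hDw : boxDist k m v w ≤ (m : ℤ) := by
    have h1 := boxDist_le_supDist (k := k) (m := m) (v := v) w hwA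
    have h2 : supDist w w = 0 := by
      unfold supDist
      simp
    omega
  have hlip : ∀ a b : Vtx, OpenAdj k ω a b → boxDist k m v b ≤ boxDist k m v a + 1 :=
    fun _ _ hab => boxDist_lipschitz (adj_coord_diff hab)
  obtain ⟨z, hz, hDz⟩ := exists_on_path hlip hy₀w hDw hDy₀
  refine ⟨w, hwA, z, hz, ?_, ?_⟩
  · intro a ha
    have := boxDist_le_supDist (k := k) (m := m) (v := v) z ha
    omega
  · obtain ⟨a, ha, hEq⟩ := exists_supDist_eq_boxDist hm0 v z
    exact ⟨a, ha, by omega⟩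

lemma boxIdx_zero {m : ℕ} (hm : 0 < m) : boxIdx m (0 : Vtx) = (-1, -1) := by
  have hmZ : (0 : ℤ) < (m : ℤ) := by exact_mod_cast hm
  unfold boxIdx
  have h1 : ((0 : Vtx).1 - 1) = (-1 : ℤ) := rfl
  have h2 : ((0 : Vtx).2.1 - 1) = (-1 : ℤ) := rfl
  rw [h1, h2]
  have : (-1 : ℤ) / (m : ℤ) = -1 := by
    rw [ediv_eq_iff' hmZ]
    constructor <;> linarith
  rw [this]

lemma boxIdx_step {m : ℕ} (hm : 0 < m) {b c : Vtx} (i : Fin 3) (h : c = b + dvec i) :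
    boxIdx m c = boxIdx m b ∨
      (|(boxIdx m c).1 - (boxIdx m b).1| + |(boxIdx m c).2 - (boxIdx m b).2| = 1) := by
  have hmZ : (0 : ℤ) < (m : ℤ) := by exact_mod_cast hm
  subst h
  fin_cases i
  · -- first coordinate
    simp only [dvec, boxIdx, Prod.fst_add, Prod.snd_add]
    set q := (b.1 - 1) / (m : ℤ) with hq
    have hqe : (m : ℤ) * q ≤ b.1 - 1 ∧ b.1 - 1 < (m : ℤ) * q + (m : ℤ) :=
      (ediv_eq_iff' hmZ).mp rfl
    by_cases hc : b.1 < (m : ℤ) * q + (m : ℤ)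
    · left
      have hdiv : b.1 / (m : ℤ) = q := by
        rw [ediv_eq_iff' hmZ]
        constructor <;> linarith [hqe.1, hqe.2]
      simp [hdiv]
    · right
      push_neg at hc
      have hbe : b.1 = (m : ℤ) * q + (m : ℤ) := by
        have := hqe.2
        linarith
      have h2 : (b.1 + 1 - 1) / (m : ℤ) = q + 1 := by
        rw [ediv_eq_iff' hmZ]
        constructor <;> nlinarith
      rw [h2]
      simp only [add_zero, sub_self, abs_zero]
      have : q + 1 - q = 1 := by ring
      rw [this]
      norm_num
  · -- second coordinate
    simp only [dvec, boxIdx, Prod.fst_add, Prod.snd_add]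
    set q := (b.2.1 - 1) / (m : ℤ) with hq
    have hqe : (m : ℤ) * q ≤ b.2.1 - 1 ∧ b.2.1 - 1 < (m : ℤ) * q + (m : ℤ) :=
      (ediv_eq_iff' hmZ).mp rfl
    by_cases hc : b.2.1 < (m : ℤ) * q + (m : ℤ)
    · left
      have hdiv : b.2.1 / (m : ℤ) = q := by
        rw [ediv_eq_iff' hmZ]
        constructor <;> linarith [hqe.1, hqe.2]
      simp [hdiv]
    · right
      push_neg at hc
      have hbe : b.2.1 = (m : ℤ) * q + (m : ℤ) := by
        have := hqe.2
        linarith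
      have h2 : (b.2.1 + 1 - 1) / (m : ℤ) = q + 1 := by
        rw [ediv_eq_iff' hmZ]
        constructor <;> nlinarith
      rw [h2]
      simp only [add_zero, sub_self, abs_zero]
      have : q + 1 - q = 1 := by ring
      rw [this]
      norm_num
  · -- vertical: same box
    left
    simp only [dvec, boxIdx, Prod.fst_add, Prod.snd_add]
    simp

lemma site_path {k m : ℕ} (hm : k < m) {ω : Config} {n : ℕ}
    (hn : (k + 1) * (4 * m + 1) ^ 2 ≤ n) (hcard : (n : ℕ∞) ≤ (cluster k ω 0).encard) :
    ∀ {w : Vtx}, w ∈ cluster k ω 0 →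
      Relation.ReflTransGen
        (fun a b : ℤ × ℤ => |a.1 - b.1| + |a.2 - b.2| = 1 ∧
          inducedSite k m ω a = true ∧ inducedSite k m ω b = true)
        ((-1, -1) : ℤ × ℤ) (boxIdx m w) := by
  have hm0 : 0 < m := lt_of_le_of_lt (Nat.zero_le k) hm
  intro w hw
  have hw' : Relation.ReflTransGen (OpenAdj k ω) 0 w := hw
  clear hw
  induction hw' with
  | refl =>
    rw [boxIdx_zero hm0]
  | @tail b c hb hstep ih =>
    have hbmem : b ∈ cluster k ω 0 := hb
    have hcmem : c ∈ cluster k ω 0 := hb.tail hstep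
    have hηb : inducedSite k m ω (boxIdx m b) = true :=
      (inducedSite_eq_true_iff k m ω _).mpr (box_open hm hn hcard hbmem)
    have hηc : inducedSite k m ω (boxIdx m c) = true :=
      (inducedSite_eq_true_iff k m ω _).mpr (box_open hm hn hcard hcmem)
    have hih := ih
    have hbox : boxIdx m c = boxIdx m b ∨
        (|(boxIdx m c).1 - (boxIdx m b).1| + |(boxIdx m c).2 - (boxIdx m b).2| = 1) := by
      obtain ⟨i, h | h⟩ := hstep
      · exact boxIdx_step hm0 i h.1
      · rcases boxIdx_step hm0 i h.1 with h' | h'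
        · exact Or.inl h'.symm
        · right
          rw [abs_sub_comm ((boxIdx m b).1) ((boxIdx m c).1),
            abs_sub_comm ((boxIdx m b).2) ((boxIdx m c).2)] at h'
          exact h'
    rcases hbox with heq | hadj
    · rw [heq]
      exact hih
    · refine hih.tail ?_
      rw [abs_sub_comm ((boxIdx m c).1) ((boxIdx m b).1),
        abs_sub_comm ((boxIdx m c).2) ((boxIdx m b).2)] at hadj
      exact ⟨hadj, hηb, hηc⟩

lemma main_combinatorial {k m : ℕ} (hm : k < m) {ω : Config} {n : ℕ}
    (hn : (k + 1) * (4 * m + 1) ^ 2 ≤ n) (hcard : (n : ℕ∞) ≤ (cluster k ω 0).encard) :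
    ENNReal.ofReal ((n : ℝ) / (((k : ℝ) + 1) * (m : ℝ) ^ 2)) ≤
      ((siteCluster (inducedSite k m ω) ((-1, -1) : ℤ × ℤ)).encard : ℝ≥0∞) := by
  classical
  have hm0 : 0 < m := lt_of_le_of_lt (Nat.zero_le k) hm
  set η := inducedSite k m ω with hη
  set C := cluster k ω 0 with hC
  have himg : boxIdx m '' C ⊆ siteCluster η ((-1, -1) : ℤ × ℤ) := by
    rintro _ ⟨w, hw, rfl⟩
    exact ⟨site_path hm hn hcard hw,
      (inducedSite_eq_true_iff k m ω _).mpr (box_open hm hn hcard hw)⟩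
  rcases (boxIdx m '' C).finite_or_infinite with hF | hI
  · set s := hF.toFinset with hs
    have hcover : C ⊆ ⋃ v ∈ s, Svm k m v := by
      intro w hw
      have hws : boxIdx m w ∈ s := hF.mem_toFinset.mpr (mem_image_of_mem _ hw)
      exact mem_biUnion hws ((mem_Svm_iff hm0).mpr ⟨cluster_subset_slab w hw, rfl⟩)
    have h1 : (n : ℕ∞) ≤ ∑ v ∈ s, (Svm k m v).encard :=
      hcard.trans ((Set.encard_mono hcover).trans (encard_biUnion_le s _))
    have h2 : (n : ℕ∞) ≤ (s.card : ℕ∞) * ((m * m * (k + 1) : ℕ) : ℕ∞) := by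
      refine h1.trans ?_
      calc ∑ v ∈ s, (Svm k m v).encard
          ≤ ∑ _v ∈ s, ((m * m * (k + 1) : ℕ) : ℕ∞) :=
            Finset.sum_le_sum fun v _ => encard_Svm_le v
        _ = (s.card : ℕ∞) * ((m * m * (k + 1) : ℕ) : ℕ∞) := by
            rw [Finset.sum_const, nsmul_eq_mul]
    have hnat : n ≤ s.card * (m * m * (k + 1)) := by
      have h3 : ((n : ℕ) : ℕ∞) ≤ ((s.card * (m * m * (k + 1)) : ℕ) : ℕ∞) := by
        rw [Nat.cast_mul]
        exact h2
      exact_mod_cast h3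
    have hcardle : (s.card : ℕ∞) ≤ (siteCluster η ((-1, -1) : ℤ × ℤ)).encard := by
      calc (s.card : ℕ∞) = (boxIdx m '' C).encard := by
            rw [hs, ← Set.Finite.encard_eq_coe_toFinset_card hF]
        _ ≤ _ := Set.encard_mono himg
    refine le_trans ?_ (ENat.toENNReal_le.mpr hcardle)
    rw [ENat.toENNReal_coe]
    rw [← ENNReal.ofReal_natCast s.card]
    apply ENNReal.ofReal_le_ofReal
    rw [div_le_iff₀ (by positivity)]
    calc (n : ℝ) ≤ ((s.card * (m * m * (k + 1)) : ℕ) : ℝ) := by exact_mod_cast hnat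
      _ = (s.card : ℝ) * (((k : ℝ) + 1) * (m : ℝ) ^ 2) := by push_cast; ring
  · have htop : (siteCluster η ((-1, -1) : ℤ × ℤ)).encard = ⊤ :=
      Set.encard_eq_top (hI.mono himg)
    rw [htop]
    simp

end Combinatorics

section Transfer

/-- The translation vector `(-m, -m, 0)`. -/
def uvec (m : ℕ) : Vtx := (-(m : ℤ), -(m : ℤ), 0)

lemma sub_add_uvec (m : ℕ) (z : Vtx) : z - uvec m + uvec m = z := by abel

lemma add_sub_uvec (m : ℕ) (z : Vtx) : z + uvec m - uvec m = z := by abel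

/-- Translation of edges by `(-m, -m, 0)`. -/
def shiftE (m : ℕ) : EdgeIdx ≃ EdgeIdx where
  toFun e := (e.1 + uvec m, e.2)
  invFun e := (e.1 - uvec m, e.2)
  left_inv e := by
    simp only [add_sub_uvec]
  right_inv e := by
    simp only [sub_add_uvec]

lemma measurable_precompShiftE (m : ℕ) :
    Measurable fun ω : Config => ω ∘ (shiftE m) :=
  measurable_pi_lambda _ fun e => measurable_pi_apply _

lemma slabMeasure_shift_invariant (k m : ℕ) (p q : ℝ) :
    Measure.map (fun ω : Config => ω ∘ (shiftE m)) (slabMeasure k p q) = slabMeasure k p q := by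
  unfold slabMeasure
  exact bernoulliProduct_map_precomp _ (shiftE m) (fun e => rfl)

lemma uvec_thd (m : ℕ) (z : Vtx) : (z + uvec m).2.2 = z.2.2 := by
  show z.2.2 + 0 = z.2.2
  ring

lemma inSlab_shift (k m : ℕ) (z : Vtx) : InSlab k (z + uvec m) ↔ InSlab k z := by
  unfold InSlab
  rw [uvec_thd]

lemma isEdge_shift (k m : ℕ) (x : Vtx) (i : Fin 3) :
    IsEdge k (x + uvec m, i) ↔ IsEdge k (x, i) := by
  unfold IsEdge
  have h : (x + uvec m) + dvec i = (x + dvec i) + uvec m := add_right_comm x (uvec m) (dvec i)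
  show InSlab k (x + uvec m) ∧ InSlab k ((x + uvec m) + dvec i) ↔ _
  rw [h, inSlab_shift, inSlab_shift]

lemma openAdj_shift {k m : ℕ} (ω : Config) (x y : Vtx) :
    OpenAdj k (ω ∘ (shiftE m)) x y ↔ OpenAdj k ω (x + uvec m) (y + uvec m) := by
  unfold OpenAdj
  constructor
  · rintro ⟨i, h | h⟩
    · refine ⟨i, Or.inl ⟨?_, ?_, ?_⟩⟩
      · rw [h.1, add_right_comm]
      · exact (isEdge_shift k m x i).mpr h.2.1
      · exact h.2.2
    · refine ⟨i, Or.inr ⟨?_, ?_, ?_⟩⟩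
      · rw [h.1, add_right_comm]
      · exact (isEdge_shift k m y i).mpr h.2.1
      · exact h.2.2
  · rintro ⟨i, h | h⟩
    · refine ⟨i, Or.inl ⟨?_, ?_, ?_⟩⟩
      · have h1 : y + uvec m = (x + dvec i) + uvec m := by
          rw [h.1, add_right_comm]
        exact add_right_cancel h1
      · exact (isEdge_shift k m x i).mp h.2.1
      · exact h.2.2
    · refine ⟨i, Or.inr ⟨?_, ?_, ?_⟩⟩
      · have h1 : x + uvec m = (y + dvec i) + uvec m := by
          rw [h.1, add_right_comm]
        exact add_right_cancel h1
      · exact (isEdge_shift k m y i).mp h.2.1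
      · exact h.2.2

lemma mem_cluster_shift {k m : ℕ} (ω : Config) (x y : Vtx) :
    y ∈ cluster k (ω ∘ (shiftE m)) x ↔ y + uvec m ∈ cluster k ω (x + uvec m) := by
  constructor
  · intro h
    have h' : Relation.ReflTransGen (OpenAdj k (ω ∘ (shiftE m))) x y := h
    exact Relation.ReflTransGen.lift (fun z : Vtx => z + uvec m)
      (fun a b hab => (openAdj_shift ω a b).mp hab) _ _ h'
  · intro h
    have h' : Relation.ReflTransGen (OpenAdj k ω) (x + uvec m) (y + uvec m) := h
    have hstep : ∀ a b : Vtx, OpenAdj k ω a b →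
        OpenAdj k (ω ∘ (shiftE m)) (a - uvec m) (b - uvec m) := by
      intro a b hab
      apply (openAdj_shift ω (a - uvec m) (b - uvec m)).mpr
      rw [sub_add_uvec, sub_add_uvec]
      exact hab
    have h2 : Relation.ReflTransGen (OpenAdj k (ω ∘ (shiftE m))) (x + uvec m - uvec m)
        (y + uvec m - uvec m) := Relation.ReflTransGen.lift (fun z : Vtx => z - uvec m) hstep _ _ h'
    simp only [add_sub_uvec] at h2
    exact h2

lemma supDist_shift (m : ℕ) (y a : Vtx) : supDist (y + uvec m) (a + uvec m) = supDist y a := by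
  unfold supDist
  have e1 : (y + uvec m).1 - (a + uvec m).1 = y.1 - a.1 := by
    show y.1 + (uvec m).1 - (a.1 + (uvec m).1) = y.1 - a.1
    ring
  have e2 : (y + uvec m).2.1 - (a + uvec m).2.1 = y.2.1 - a.2.1 := by
    show y.2.1 + (uvec m).2.1 - (a.2.1 + (uvec m).2.1) = y.2.1 - a.2.1
    ring
  have e3 : (y + uvec m).2.2 - (a + uvec m).2.2 = y.2.2 - a.2.2 := by
    show y.2.2 + (uvec m).2.2 - (a.2.2 + (uvec m).2.2) = y.2.2 - a.2.2
    ring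
  rw [e1, e2, e3]

lemma cmEvent_shift {k mm : ℕ} (m : ℕ) (ω : Config) (A : Set Vtx) :
    (ω ∘ (shiftE m)) ∈ CmEvent k mm A ↔ ω ∈ CmEvent k mm ((fun z : Vtx => z + uvec m) '' A) := by
  unfold CmEvent
  simp only [mem_setOf_eq]
  constructor
  · rintro ⟨x, hx, y, hy, hall, a, ha, heq⟩
    refine ⟨x + uvec m, mem_image_of_mem _ hx, y + uvec m,
      (mem_cluster_shift ω x y).mp hy, ?_, a + uvec m, mem_image_of_mem _ ha, ?_⟩
    · rintro _ ⟨a₀, ha₀, rfl⟩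
      rw [supDist_shift]
      exact hall a₀ ha₀
    · rw [supDist_shift]
      exact heq
  · rintro ⟨x', hx', y', hy', hall, a', ha', heq⟩
    obtain ⟨x, hx, rfl⟩ := hx'
    obtain ⟨a, ha, rfl⟩ := ha'
    refine ⟨x, hx, y' - uvec m, ?_, ?_, a, ha, ?_⟩
    · rw [mem_cluster_shift, sub_add_uvec]
      exact hy'
    · intro a₀ ha₀
      have h := hall (a₀ + uvec m) (mem_image_of_mem _ ha₀)
      have he : supDist (y' - uvec m) a₀ = supDist y' (a₀ + uvec m) := by
        rw [← supDist_shift m (y' - uvec m) a₀, sub_add_uvec]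
      rw [he]
      exact h
    · have he : supDist (y' - uvec m) a = supDist y' (a + uvec m) := by
        rw [← supDist_shift m (y' - uvec m) a, sub_add_uvec]
      rw [he]
      exact heq

lemma svm_shift (k m : ℕ) (v : ℤ × ℤ) :
    (fun z : Vtx => z + uvec m) '' Svm k m v = Svm k m (v.1 - 1, v.2 - 1) := by
  have hone : ((m : ℤ) * (v.1 - 1)) = (m : ℤ) * v.1 - (m : ℤ) := by ring
  have htwo : ((m : ℤ) * (v.2 - 1)) = (m : ℤ) * v.2 - (m : ℤ) := by ring
  ext w
  simp only [mem_image]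
  constructor
  · rintro ⟨z, hz, rfl⟩
    obtain ⟨h1, h2, h3, h4, h5⟩ := hz
    have e1 : (z + uvec m).1 = z.1 - (m : ℤ) := by
      show z.1 + -(m : ℤ) = z.1 - (m : ℤ)
      ring
    have e2 : (z + uvec m).2.1 = z.2.1 - (m : ℤ) := by
      show z.2.1 + -(m : ℤ) = z.2.1 - (m : ℤ)
      ring
    refine ⟨?_, ?_, ?_, ?_, ?_⟩
    · show (m : ℤ) * (v.1 - 1) + 1 ≤ (z + uvec m).1
      rw [hone, e1]
      linarith
    · show (z + uvec m).1 ≤ (m : ℤ) * (v.1 - 1) + (m : ℤ)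
      rw [hone, e1]
      linarith
    · show (m : ℤ) * (v.2 - 1) + 1 ≤ (z + uvec m).2.1
      rw [htwo, e2]
      linarith
    · show (z + uvec m).2.1 ≤ (m : ℤ) * (v.2 - 1) + (m : ℤ)
      rw [htwo, e2]
      linarith
    · exact (inSlab_shift k m z).mpr h5
  · intro hw
    obtain ⟨h1, h2, h3, h4, h5⟩ := hw
    have e1 : (w - uvec m).1 = w.1 + (m : ℤ) := by
      show w.1 - -(m : ℤ) = w.1 + (m : ℤ)
      ring
    have e2 : (w - uvec m).2.1 = w.2.1 + (m : ℤ) := by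
      show w.2.1 - -(m : ℤ) = w.2.1 + (m : ℤ)
      ring
    refine ⟨w - uvec m, ⟨?_, ?_, ?_, ?_, ?_⟩, sub_add_uvec m w⟩
    · show (m : ℤ) * v.1 + 1 ≤ (w - uvec m).1
      rw [e1]
      rw [hone] at h1
      linarith
    · show (w - uvec m).1 ≤ (m : ℤ) * v.1 + (m : ℤ)
      rw [e1]
      rw [hone] at h2
      linarith
    · show (m : ℤ) * v.2 + 1 ≤ (w - uvec m).2.1
      rw [e2]
      rw [htwo] at h3
      linarith
    · show (w - uvec m).2.1 ≤ (m : ℤ) * v.2 + (m : ℤ)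
      rw [e2]
      rw [htwo] at h4
      linarith
    · apply (inSlab_shift k m (w - uvec m)).mp
      rw [sub_add_uvec]
      exact h5

lemma inducedSite_shift (k m : ℕ) (ω : Config) (v : ℤ × ℤ) :
    inducedSite k m (ω ∘ (shiftE m)) v = inducedSite k m ω (v.1 - 1, v.2 - 1) := by
  have hiff : (ω ∘ (shiftE m)) ∈ CmEvent k m (Svm k m v)
      ↔ ω ∈ CmEvent k m (Svm k m (v.1 - 1, v.2 - 1)) := by
    rw [cmEvent_shift m ω, svm_shift]
  rcases Bool.eq_false_or_eq_true (inducedSite k m ω (v.1 - 1, v.2 - 1)) with hb | hb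
  · rw [hb, inducedSite_eq_true_iff, hiff, ← inducedSite_eq_true_iff]
    exact hb
  · rw [hb, Bool.eq_false_iff]
    intro h
    rw [inducedSite_eq_true_iff, hiff, ← inducedSite_eq_true_iff] at h
    rw [h] at hb
    exact Bool.noConfusion hb

lemma siteCluster_shift (k m : ℕ) (ω : Config) :
    siteCluster (inducedSite k m (ω ∘ (shiftE m))) (0 : ℤ × ℤ)
      = (fun y : ℤ × ℤ => (y.1 - 1, y.2 - 1)) ⁻¹'
          siteCluster (inducedSite k m ω) ((-1, -1) : ℤ × ℤ) := by
  set η := inducedSite k m ω with hη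
  set η' := inducedSite k m (ω ∘ (shiftE m)) with hη'
  have hηv : ∀ v : ℤ × ℤ, η' v = η (v.1 - 1, v.2 - 1) := fun v => inducedSite_shift k m ω v
  have hrel : ∀ a b : ℤ × ℤ,
      (|a.1 - b.1| + |a.2 - b.2| = 1 ∧ η' a = true ∧ η' b = true) ↔
        (|(a.1 - 1) - (b.1 - 1)| + |(a.2 - 1) - (b.2 - 1)| = 1 ∧
          η (a.1 - 1, a.2 - 1) = true ∧ η (b.1 - 1, b.2 - 1) = true) := by
    intro a b
    have e1 : (a.1 - 1) - (b.1 - 1) = a.1 - b.1 := by ring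
    have e2 : (a.2 - 1) - (b.2 - 1) = a.2 - b.2 := by ring
    rw [e1, e2, hηv a, hηv b]
  have hzero : ((0 : ℤ × ℤ).1 - 1, (0 : ℤ × ℤ).2 - 1) = ((-1, -1) : ℤ × ℤ) := by
    rw [Prod.ext_iff]
    constructor <;> norm_num
  ext y
  unfold siteCluster
  simp only [mem_setOf_eq, mem_preimage]
  constructor
  · rintro ⟨hR, hy⟩
    refine ⟨?_, ?_⟩
    · have hl := Relation.ReflTransGen.lift
        (p := fun u w : ℤ × ℤ => |u.1 - w.1| + |u.2 - w.2| = 1 ∧ η u = true ∧ η w = true)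
        (fun z : ℤ × ℤ => (z.1 - 1, z.2 - 1))
        (fun a b hab => (hrel a b).mp hab) _ _ hR
      have hl2 : Relation.ReflTransGen
          (fun a b : ℤ × ℤ => |a.1 - b.1| + |a.2 - b.2| = 1 ∧ η a = true ∧ η b = true)
          ((0 : ℤ × ℤ).1 - 1, (0 : ℤ × ℤ).2 - 1) (y.1 - 1, y.2 - 1) := hl
      rw [hzero] at hl2
      exact hl2
    · rw [← hηv y]
      exact hy
  · rintro ⟨hR, hy⟩
    refine ⟨?_, ?_⟩
    · have hstep : ∀ a b : ℤ × ℤ,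
          (|a.1 - b.1| + |a.2 - b.2| = 1 ∧ η a = true ∧ η b = true) →
          (|(a.1 + 1) - (b.1 + 1)| + |(a.2 + 1) - (b.2 + 1)| = 1 ∧
            η' (a.1 + 1, a.2 + 1) = true ∧ η' (b.1 + 1, b.2 + 1) = true) := by
        intro a b hab
        have h2 := (hrel (a.1 + 1, a.2 + 1) (b.1 + 1, b.2 + 1)).mpr
        have e1 : (a.1 + 1 - 1) = a.1 := by ring
        have e2 : (a.2 + 1 - 1) = a.2 := by ring
        have e3 : (b.1 + 1 - 1) = b.1 := by ring
        have e4 : (b.2 + 1 - 1) = b.2 := by ring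
        simp only [e1, e2, e3, e4] at h2
        exact h2 hab
      have hl := Relation.ReflTransGen.lift
        (p := fun u w : ℤ × ℤ => |u.1 - w.1| + |u.2 - w.2| = 1 ∧ η' u = true ∧ η' w = true)
        (fun z : ℤ × ℤ => (z.1 + 1, z.2 + 1))
        (fun a b hab => hstep a b hab) _ _ hR
      have hz1 : (((-1, -1) : ℤ × ℤ).1 + 1, ((-1, -1) : ℤ × ℤ).2 + 1) = (0 : ℤ × ℤ) := by
        rw [Prod.ext_iff]
        constructor <;> norm_num
      have hz2 : ((y.1 - 1, y.2 - 1).1 + 1, (y.1 - 1, y.2 - 1).2 + 1) = y := by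
        rw [Prod.ext_iff]
        constructor <;> (show _ = _; ring)
      have hl2 : Relation.ReflTransGen
          (fun a b : ℤ × ℤ => |a.1 - b.1| + |a.2 - b.2| = 1 ∧ η' a = true ∧ η' b = true)
          (((-1, -1) : ℤ × ℤ).1 + 1, ((-1, -1) : ℤ × ℤ).2 + 1)
          (((y.1 - 1, y.2 - 1) : ℤ × ℤ).1 + 1, ((y.1 - 1, y.2 - 1) : ℤ × ℤ).2 + 1) := hl
      rw [hz1, hz2] at hl2
      exact hl2
    · rw [hηv y]
      exact hy

lemma encard_preimage_subshift (S₀ : Set (ℤ × ℤ)) :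
    ((fun y : ℤ × ℤ => (y.1 - 1, y.2 - 1)) ⁻¹' S₀).encard = S₀.encard := by
  have himg : (fun y : ℤ × ℤ => (y.1 - 1, y.2 - 1)) ⁻¹' S₀
      = (fun y : ℤ × ℤ => (y.1 + 1, y.2 + 1)) '' S₀ := by
    ext z
    simp only [mem_preimage, mem_image]
    constructor
    · intro h
      refine ⟨(z.1 - 1, z.2 - 1), h, ?_⟩
      rw [Prod.ext_iff]
      constructor <;> (show _ = _; ring)
    · rintro ⟨w, hw, rfl⟩
      have he : (((w.1 + 1, w.2 + 1) : ℤ × ℤ).1 - 1, ((w.1 + 1, w.2 + 1) : ℤ × ℤ).2 - 1) = w := by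
        rw [Prod.ext_iff]
        constructor <;> (show _ = _; ring)
      rw [he]
      exact hw
  rw [himg]
  apply Set.InjOn.encard_image
  intro a _ b _ hab
  rw [Prod.mk.injEq] at hab
  obtain ⟨h1, h2⟩ := hab
  rw [Prod.ext_iff]
  constructor <;> omega

end Transfer


/-- For `n ≥ (k+1)(4m+1)²`,
`P_{p,q}(|C₀| ≥ n) ≤ P̃(|C̃₀| ≥ n / ((k+1) m²))`. -/
theorem cluster_le_induced (k m : ℕ) (hm : k < m) (p q : ℝ)
    (hp : p ∈ Set.Icc (0 : ℝ) 1) (hq : q ∈ Set.Icc (0 : ℝ) 1)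
    (n : ℕ) (hn : (k + 1) * (4 * m + 1) ^ 2 ≤ n) :
    slabMeasure k p q {ω | (n : ℕ∞) ≤ (cluster k ω 0).encard} ≤
      inducedMeasure k m p q
        {η | ENNReal.ofReal ((n : ℝ) / (((k : ℝ) + 1) * (m : ℝ) ^ 2)) ≤
              ((siteCluster η 0).encard : ℝ≥0∞)} := by
  have hsub : {ω : Config | (n : ℕ∞) ≤ (cluster k ω 0).encard} ⊆
      (fun ω : Config => ω ∘ (shiftE m)) ⁻¹' ((inducedSite k m) ⁻¹'
        {η : (ℤ × ℤ) → Bool | ENNReal.ofReal ((n : ℝ) / (((k : ℝ) + 1) * (m : ℝ) ^ 2)) ≤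
          ((siteCluster η 0).encard : ℝ≥0∞)}) := by
    intro ω hω
    simp only [mem_preimage, mem_setOf_eq]
    have hmain := main_combinatorial hm hn hω
    have hcl : (siteCluster (inducedSite k m (ω ∘ (shiftE m))) (0 : ℤ × ℤ)).encard
        = (siteCluster (inducedSite k m ω) ((-1, -1) : ℤ × ℤ)).encard := by
      rw [siteCluster_shift, encard_preimage_subshift]
    rw [hcl]
    exact hmain
  refine le_trans (measure_mono hsub) ?_
  refine le_trans (Measure.le_map_apply (measurable_precompShiftE m).aemeasurable _) ?_
  rw [slabMeasure_shift_invariant k m p q]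
  exact Measure.le_map_apply (measurable_inducedSite k m).aemeasurable _

end AnisoSlab
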